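/- Let x : [t0, t*) → ℝ be a Schwarzschild profile solution (for any integer n ≥ 3). Then for all t ∈ [t0, t*) one has x''(t) ≥ (n−2)·(1 + x'(t)²)/x(t). -/

import Mathlib

/-- The coefficient function χ(x,t) = 2m(n−1)/(2(x²+t²)^n + m(x²+t²)). -/
noncomputable def schChi (n : ℕ) (m x t : ℝ) : ℝ :=
  2 * m * ((n : ℝ) - 1) / (2 * (x ^ 2 + t ^ 2) ^ n + m * (x ^ 2 + t ^ 2))

/-- A Schwarzschild profile solution on the interval [t0, t*), with t* ∈ ℝ ∪ {+∞}
encoded as an `EReal`.  The functions `x'` and `x''` are the first and second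
derivatives of the twice continuously differentiable positive function `x`,
which solves the profile ODE with the free-boundary initial conditions. -/
structure IsSchwarzschildProfile (n : ℕ) (m R0 t0 : ℝ) (tstar : EReal)
    (x x' x'' : ℝ → ℝ) : Prop where
  hasDeriv : ∀ t : ℝ, t0 ≤ t → (t : EReal) < tstar → HasDerivAt x (x' t) t
  hasDeriv2 : ∀ t : ℝ, t0 ≤ t → (t : EReal) < tstar → HasDerivAt x' (x'' t) t
  cont2 : ContinuousOn x'' {t : ℝ | t0 ≤ t ∧ (t : EReal) < tstar}
  pos : ∀ t : ℝ, t0 ≤ t → (t : EReal) < tstar → 0 < x t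
  ode : ∀ t : ℝ, t0 ≤ t → (t : EReal) < tstar →
    x'' t = ((t * x' t - x t) * schChi n m (x t) t + ((n : ℝ) - 2) / x t)
      * (1 + (x' t) ^ 2)
  init : x t0 = Real.sqrt (R0 ^ 2 - t0 ^ 2)
  initDeriv : t0 * x' t0 = x t0

/-!
Put `u(t) = t x'(t) - x(t)`, so that `u(t₀) = 0` by the free-boundary condition and `u' = t x''`.
Wherever `u` vanishes the ODE reduces to `x'' = (n-2)(1+x'²)/x > 0`, so `u` cannot cross zero
downwards and stays nonnegative. Since `χ ≥ 0`, the term `u χ (1+x'²)` of the ODE is then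
nonnegative, which is the claimed bound.
-/

open Set

theorem schChi_nonneg {n : ℕ} (hn : 1 ≤ n) {m : ℝ} (hm : 0 ≤ m) (x t : ℝ) :
    0 ≤ schChi n m x t := by
  have hn' : (1 : ℝ) ≤ n := by exact_mod_cast hn
  unfold schChi
  apply div_nonneg <;> [nlinarith; positivity]

theorem nonneg_of_deriv_pos_at_zeros {u u' : ℝ → ℝ} {a b : ℝ} (hu : ContinuousOn u (Icc a b))
    (hu' : ∀ s ∈ Ico a b, HasDerivWithinAt u (u' s) (Ici s) s) (ha : 0 ≤ u a)
    (hzero : ∀ s ∈ Ico a b, u s = 0 → 0 < u' s) : ∀ s ∈ Icc a b, 0 ≤ u s :=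
  image_le_of_deriv_right_lt_deriv_boundary' continuousOn_const
    (fun _ _ => hasDerivWithinAt_const _ _ _) ha hu hu' fun s hs h => hzero s hs h.symm

theorem HasDerivAt.mul_deriv_sub_self {x x' : ℝ → ℝ} {t v : ℝ} (hx : HasDerivAt x (x' t) t)
    (hx' : HasDerivAt x' v t) : HasDerivAt (fun s => s * x' s - x s) (t * v) t :=
  (((hasDerivAt_id' t).mul hx').sub hx).congr_deriv (by ring)

namespace IsSchwarzschildProfile

variable {n : ℕ} {m R0 t0 : ℝ} {tstar : EReal} {x x' x'' : ℝ → ℝ}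

theorem hasDerivAt_mul_deriv_sub (hx : IsSchwarzschildProfile n m R0 t0 tstar x x' x'')
    {t : ℝ} (h0 : t0 ≤ t) (h1 : (t : EReal) < tstar) :
    HasDerivAt (fun s => s * x' s - x s) (t * x'' t) t :=
  (hx.hasDeriv t h0 h1).mul_deriv_sub_self (hx.hasDeriv2 t h0 h1)

theorem second_deriv_pos_of_mul_deriv_eq (hx : IsSchwarzschildProfile n m R0 t0 tstar x x' x'')
    (hn : 3 ≤ n) {t : ℝ} (h0 : t0 ≤ t) (h1 : (t : EReal) < tstar) (hu : t * x' t - x t = 0) :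
    0 < x'' t := by
  have hn' : (3 : ℝ) ≤ n := by exact_mod_cast hn
  have hxt := hx.pos t h0 h1
  rw [hx.ode t h0 h1, hu, zero_mul, zero_add]
  exact mul_pos (div_pos (by linarith) hxt) (by positivity)

theorem mul_deriv_sub_nonneg (hx : IsSchwarzschildProfile n m R0 t0 tstar x x' x'')
    (hn : 3 ≤ n) (ht0 : 0 < t0) {t : ℝ} (h0 : t0 ≤ t) (h1 : (t : EReal) < tstar) :
    0 ≤ t * x' t - x t := by
  have hdom : ∀ s ∈ Icc t0 t, t0 ≤ s ∧ (s : EReal) < tstar := fun s hs =>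
    ⟨hs.1, lt_of_le_of_lt (EReal.coe_le_coe_iff.mpr hs.2) h1⟩
  have hderiv : ∀ s ∈ Icc t0 t, HasDerivAt (fun s => s * x' s - x s) (s * x'' s) s :=
    fun s hs => hx.hasDerivAt_mul_deriv_sub (hdom s hs).1 (hdom s hs).2
  refine nonneg_of_deriv_pos_at_zeros
    (fun s hs => (hderiv s hs).continuousAt.continuousWithinAt)
    (fun s hs => (hderiv s (Ico_subset_Icc_self hs)).hasDerivWithinAt)
    (by simp [hx.initDeriv]) (fun s hs hu => ?_) t ⟨h0, le_rfl⟩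
  obtain ⟨hs0, hs1⟩ := hdom s (Ico_subset_Icc_self hs)
  exact mul_pos (ht0.trans_le hs0) (hx.second_deriv_pos_of_mul_deriv_eq hn hs0 hs1 hu)

end IsSchwarzschildProfile

theorem statement5_general (n : ℕ) (hn : 3 ≤ n) (m R0 t0 : ℝ) (hm : 0 < m)
    (ht0 : 0 < t0) (tstar : EReal)
    (x x' x'' : ℝ → ℝ) (hx : IsSchwarzschildProfile n m R0 t0 tstar x x' x'') :
    ∀ t : ℝ, t0 ≤ t → (t : EReal) < tstar →
      ((n : ℝ) - 2) * (1 + (x' t) ^ 2) / x t ≤ x'' t := by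
  intro t h0 h1
  have hu := hx.mul_deriv_sub_nonneg hn ht0 h0 h1
  have hχ := schChi_nonneg (by omega : 1 ≤ n) hm.le (x t) t
  have hdrift : 0 ≤ (t * x' t - x t) * schChi n m (x t) t * (1 + x' t ^ 2) := by positivity
  rw [hx.ode t h0 h1]
  calc ((n : ℝ) - 2) * (1 + x' t ^ 2) / x t
      ≤ (t * x' t - x t) * schChi n m (x t) t * (1 + x' t ^ 2)
        + ((n : ℝ) - 2) * (1 + x' t ^ 2) / x t := le_add_of_nonneg_left hdrift
    _ = _ := by ring

/-- a Schwarzschild profile solution satisfies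
x''(t) ≥ (n−2)·(1 + x'(t)²)/x(t) on its interval of definition. -/
theorem statement5 (n : ℕ) (hn : 3 ≤ n) (m R0 t0 : ℝ) (hm : 0 < m)
    (ht0 : 0 < t0) (htR : t0 < R0) (tstar : EReal) (hts : (t0 : EReal) < tstar)
    (x x' x'' : ℝ → ℝ) (hx : IsSchwarzschildProfile n m R0 t0 tstar x x' x'') :
    ∀ t : ℝ, t0 ≤ t → (t : EReal) < tstar →
      ((n : ℝ) - 2) * (1 + (x' t) ^ 2) / x t ≤ x'' t :=
  statement5_general n hn m R0 t0 hm ht0 tstar x x' x'' hx
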